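/- Let ∂ be a generator and x_1, …, x_m ∈ X with m ≥ 2. Then μ ∈ N satisfies ∂(μ + δ_{x_i}) = ∂(μ + δ_{x_i} + δ_{x_{i+1}}) for all i = 1, …, m (indices cyclic, so x_{m+1} = x_1) if and only if ∂(μ + δ_{x_1}) = ⋯ = ∂(μ + δ_{x_m}) = ∂μ. -/

import Mathlib

/-- The Dirac counting measure at a point, in the model of counting measures
on `X` as functions `X → ℕ` (pointwise order and addition). -/
noncomputable def delta {X : Type*} (x : X) : X → ℕ := Set.indicator {x} 1

/-- A generator: a map on counting measures satisfying (H1) thinning, (H2) additivity,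
(H3) idempotency and (H4) consistency. -/
def IsGenerator {X : Type*} (D : (X → ℕ) → (X → ℕ)) : Prop :=
  (∀ μ, D μ ≤ μ) ∧
  (∀ μ x, D μ x ≠ 0 → D (μ + delta x) = D μ + delta x) ∧
  (∀ μ μ' : X → ℕ, μ' ≤ μ - D μ → D (D μ + μ') = D μ) ∧
  (∀ μ μ' ψ : X → ℕ, μ' ≤ μ → D μ = D μ' → D (μ + ψ) = D (μ' + ψ))

/-- The hull operator associated with a generator. -/
def hull {X : Type*} (D : (X → ℕ) → (X → ℕ)) (μ : X → ℕ) : Set X :=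
  {x | D (μ + delta x) = D μ}

open scoped Classical

/-- The indicator `H_x(μ) = 1{∂(μ + δ_x) ≠ ∂μ}`, as a real number. -/
noncomputable def Hf {X : Type*} (D : (X → ℕ) → (X → ℕ)) (x : X) (μ : X → ℕ) : ℝ :=
  if D (μ + delta x) = D μ then 0 else 1


/-!
Along the cycle, consistency (H4) lets one add the points `x_{i+1}, x_{i+2}, …` to
`μ + δ_{x_i}` one at a time without changing `∂`; going once around shows that every
`∂(μ + δ_{x_i})` equals `∂(μ + ∑ⱼ δ_{x_j})`, a common value `ν`. Thinning (H1) gives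
`ν ≤ μ + δ_{x_i}` and `ν ≤ μ + δ_{x_{i+1}}`, hence `ν ≤ μ` except at `x` when
`x_i = x_{i+1} = x`; there `∂(μ + δ_x) = ∂(μ + 2δ_x)`, and additivity (H2) forces `ν x = 0`.
Idempotency (H3) turns `ν ≤ μ ≤ μ + δ_{x_i}` into `∂μ = ν`. The converse is a single application of (H4).
-/

lemma delta_self {X : Type*} (x : X) : delta x x = 1 := by
  simp [delta]

lemma delta_of_ne {X : Type*} {x y : X} (h : y ≠ x) : delta x y = 0 :=
  Set.indicator_of_notMem (s := {x}) h _

open Fin.NatCast in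
lemma Fin.sum_range_add_left {M : Type*} [AddCommMonoid M] {m : ℕ} [NeZero m]
    (g : Fin m → M) (i : Fin m) :
    ∑ t ∈ Finset.range m, g (i + (t : Fin m)) = ∑ j, g j := by
  rw [← Fin.sum_univ_eq_sum_range (fun t => g (i + (t : Fin m)))]
  simp only [Fin.cast_val_eq_self]
  exact Equiv.sum_comp (Equiv.addLeft i) g

namespace IsGenerator

variable {X : Type*} {D : (X → ℕ) → (X → ℕ)} (hD : IsGenerator D)
include hD

lemma le (μ : X → ℕ) : D μ ≤ μ := hD.1 μ

lemma add_delta_of_ne_zero {μ : X → ℕ} {x : X} (h : D μ x ≠ 0) :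
    D (μ + delta x) = D μ + delta x :=
  hD.2.1 μ x h

lemma add_eq_add_of_le_of_eq {μ μ' : X → ℕ} (hle : μ' ≤ μ) (h : D μ = D μ') (ψ : X → ℕ) :
    D (μ + ψ) = D (μ' + ψ) :=
  hD.2.2.2 μ μ' ψ hle h

lemma eq_of_le_of_le {μ ν : X → ℕ} (h₁ : D ν ≤ μ) (h₂ : μ ≤ ν) : D μ = D ν := by
  have hsub : μ - D ν ≤ ν - D ν := fun y => Nat.sub_le_sub_right (h₂ y) _
  have hμ : D ν + (μ - D ν) = μ := funext fun y => Nat.add_sub_cancel' (h₁ y)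
  rw [← hD.2.2.1 ν _ hsub, hμ]

lemma apply_eq_zero_of_add_delta_eq {ν : X → ℕ} {x : X} (h : D (ν + delta x) = D ν) :
    D ν x = 0 := by
  by_contra hx
  have := congrFun (h.symm.trans (hD.add_delta_of_ne_zero hx)) x
  simp [delta_self] at this

lemma add_add_delta_eq_of_add_delta_eq {μ : X → ℕ} {y : X} (hy : D (μ + delta y) = D μ)
    (ψ : X → ℕ) : D (μ + ψ + delta y) = D (μ + ψ) := by
  rw [add_right_comm]
  exact hD.add_eq_add_of_le_of_eq le_self_add hy ψ

lemma add_delta_eq_of_eq_of_eq {μ : X → ℕ} {x y : X}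
    (hxy : D (μ + delta x) = D (μ + delta y))
    (hx : D (μ + delta x) = D (μ + delta x + delta y)) :
    D (μ + delta x) = D μ := by
  symm
  refine hD.eq_of_le_of_le (fun z => ?_) le_self_add
  by_cases hzx : z = x
  · subst hzx
    by_cases hyz : y = z
    · subst hyz
      simp [hD.apply_eq_zero_of_add_delta_eq hx.symm]
    · calc D (μ + delta z) z = D (μ + delta y) z := by rw [hxy]
        _ ≤ μ z + delta y z := hD.le _ z
        _ = μ z := by rw [delta_of_ne (Ne.symm hyz), add_zero]
  · calc D (μ + delta x) z ≤ μ z + delta x z := hD.le _ z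
      _ = μ z := by rw [delta_of_ne hzx, add_zero]

lemma add_sum_delta_eq_of_chain {μ : X → ℕ} {f : ℕ → X}
    (hf : ∀ t, D (μ + delta (f t)) = D (μ + delta (f t) + delta (f (t + 1)))) (k : ℕ) :
    D (μ + ∑ t ∈ Finset.range (k + 1), delta (f t)) = D (μ + delta (f 0)) := by
  induction k with
  | zero => simp
  | succ k ih =>
    have step := hD.add_eq_add_of_le_of_eq le_self_add (hf k).symm
      (∑ t ∈ Finset.range k, delta (f t))
    rw [← ih, Finset.sum_range_succ, Finset.sum_range_succ]
    convert step using 2 <;> abel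

open Fin.NatCast in
lemma add_delta_eq_add_sum_of_cycle {m : ℕ} [NeZero m] {μ : X → ℕ} {x : Fin m → X}
    (h : ∀ i, D (μ + delta (x i)) = D (μ + delta (x i) + delta (x (i + 1)))) (i : Fin m) :
    D (μ + delta (x i)) = D (μ + ∑ j, delta (x j)) := by
  have hchain := hD.add_sum_delta_eq_of_chain (f := fun t => x (i + (t : Fin m)))
    (fun t => by simpa only [Nat.cast_succ, add_assoc] using h (i + (t : Fin m))) (m - 1)
  rw [Nat.sub_add_cancel NeZero.one_le, Fin.sum_range_add_left (fun j => delta (x j))] at hchain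
  simpa only [Nat.cast_zero, add_zero] using hchain.symm

end IsGenerator

theorem cyclic_lemma_general {X : Type*} (D : (X → ℕ) → (X → ℕ))
    (hD : IsGenerator D) (m : ℕ) [NeZero m]
    (x : Fin m → X) (μ : X → ℕ) :
    (∀ i : Fin m, D (μ + delta (x i)) = D (μ + delta (x i) + delta (x (i + 1)))) ↔
      (∀ i : Fin m, D (μ + delta (x i)) = D μ) := by
  constructor
  · intro h i
    have hcommon : D (μ + delta (x i)) = D (μ + delta (x (i + 1))) := by
      rw [hD.add_delta_eq_add_sum_of_cycle h i, hD.add_delta_eq_add_sum_of_cycle h (i + 1)]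
    exact hD.add_delta_eq_of_eq_of_eq hcommon (h i)
  · intro h i
    rw [hD.add_add_delta_eq_of_add_delta_eq (h (i + 1))]

/-- cyclic lemma. For `m ≥ 2` points `x_1, …, x_m`,
`∂(μ + δ_{x_i}) = ∂(μ + δ_{x_i} + δ_{x_{i+1}})` holds for all `i` (cyclically) iff
`∂(μ + δ_{x_i}) = ∂μ` for all `i`. -/
theorem cyclic_lemma {X : Type*} (D : (X → ℕ) → (X → ℕ))
    (hD : IsGenerator D) (m : ℕ) [NeZero m] (hm : 2 ≤ m)
    (x : Fin m → X) (μ : X → ℕ) :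
    (∀ i : Fin m, D (μ + delta (x i)) = D (μ + delta (x i) + delta (x (i + 1)))) ↔
      (∀ i : Fin m, D (μ + delta (x i)) = D μ) :=
  cyclic_lemma_general D hD m x μ
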